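/- arXiv:1705.06244 — 4 statements merged into one kernel-verified Lean document; each statement's English description precedes it below -/
import Mathlib

section
/- Let γ be a *-connected path in ℤ^d (a finite sequence of vertices in which consecutive vertices are at ℓ∞-distance 1) whose image intersects both the sphere S(L_N − 1) and the sphere S(2L_N). Then there exists a proper embedding 𝒯 ∈ Λ_N such that for every leaf m ∈ T_(N), the image of γ intersects both S(𝒯(m), L − 1) and S(𝒯(m), 2L). -/
/-!
STATEMENT 1: If `γ` is a `*`-connected path in `ℤ^d` whose image intersects both the
sphere `S(L_N − 1)` and the sphere `S(2·L_N)` (in the `ℓ∞`-norm, `L_N = 6^N·L`), then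
there is a proper embedding `𝒯 ∈ Λ_N` such that for every leaf `m ∈ T_(N)`, the image
of `γ` intersects both `S(𝒯(m), L − 1)` and `S(𝒯(m), 2L)`.

We model `ℤ^d` as `Fin d → ℤ`, the `ℓ∞` norm as an `ℕ`-valued function, and the nodes
of the binary tree `T_N` as lists of booleans (the root is `[]`, the children of `m`
are `m ++ [false]` and `m ++ [true]`; the leaves `T_(N)` are the lists of length `N`;
only lists of length `≤ N` are relevant). A finite path is modelled as `γ : ℕ → ℤ^d`
together with a final index `n`, consecutive points being at `ℓ∞`-distance `1`.
-/

/-- The `ℓ∞` norm of a point of `ℤ^d`, as a natural number. -/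
def normInf {d : ℕ} (x : Fin d → ℤ) : ℕ := Finset.univ.sup fun i => (x i).natAbs

/-- Proper embedding of the binary tree `T_N` of height `N` (scale parameter `L`):
the root goes to `0`, level-`k` nodes land in `𝓛_{N-k} = (6^(N-k)·L)·ℤ^d`, and the
two children of a level-`k` node (`k < N`) are at `ℓ∞`-distance `6^(N-k)·L` and
`2·6^(N-k)·L` from it, respectively. -/
def IsProperEmbedding (d L N : ℕ) (T : List Bool → (Fin d → ℤ)) : Prop :=
  T [] = 0 ∧
  (∀ m : List Bool, m.length ≤ N → ∀ i : Fin d,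
      ((6 ^ (N - m.length) * L : ℕ) : ℤ) ∣ T m i) ∧
  ∀ m : List Bool, m.length < N →
    normInf (T (m ++ [false]) - T m) = 6 ^ (N - m.length) * L ∧
    normInf (T (m ++ [true]) - T m) = 2 * (6 ^ (N - m.length) * L)


lemma le_normInf {d : ℕ} (x : Fin d → ℤ) (i : Fin d) : (x i).natAbs ≤ normInf x :=
  Finset.le_sup (f := fun i => (x i).natAbs) (Finset.mem_univ i)

lemma normInf_le {d : ℕ} {x : Fin d → ℤ} {c : ℕ} (h : ∀ i, (x i).natAbs ≤ c) :
    normInf x ≤ c := Finset.sup_le fun i _ => h i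

lemma normInf_add_le {d : ℕ} (x y : Fin d → ℤ) :
    normInf (x + y) ≤ normInf x + normInf y := by
  apply normInf_le
  intro i
  calc ((x + y) i).natAbs = (x i + y i).natAbs := by simp
    _ ≤ (x i).natAbs + (y i).natAbs := Int.natAbs_add_le _ _
    _ ≤ normInf x + normInf y := Nat.add_le_add (le_normInf x i) (le_normInf y i)

lemma normInf_sub_comm {d : ℕ} (x y : Fin d → ℤ) :
    normInf (x - y) = normInf (y - x) := by
  unfold normInf
  apply Finset.sup_congr rfl
  intro i _
  simp only [Pi.sub_apply]
  omega

lemma normInf_tri {d : ℕ} (a b c : Fin d → ℤ) :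
    normInf (a - c) ≤ normInf (a - b) + normInf (b - c) := by
  have : a - c = (a - b) + (b - c) := by ring
  rw [this]; exact normInf_add_le _ _

lemma normInf_tri' {d : ℕ} (a b : Fin d → ℤ) :
    normInf a ≤ normInf (a - b) + normInf b := by
  have h := normInf_tri a b 0
  simpa using h

lemma exists_normInf_eq {d : ℕ} (hd : 1 ≤ d) (x : Fin d → ℤ) :
    ∃ i, normInf x = (x i).natAbs := by
  haveI : Nonempty (Fin d) := ⟨⟨0, hd⟩⟩
  obtain ⟨i, _, h⟩ := Finset.exists_mem_eq_sup Finset.univ Finset.univ_nonempty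
    (fun i => (x i).natAbs)
  exact ⟨i, h⟩

lemma ivt_up (f : ℕ → ℕ) (v : ℕ) :
    ∀ k a, (∀ i, a ≤ i → i < a + k → f (i+1) ≤ f i + 1) →
      f a ≤ v → v ≤ f (a + k) → ∃ i, a ≤ i ∧ i ≤ a + k ∧ f i = v := by
  intro k
  induction k with
  | zero => intro a _ h1 h2; rw [Nat.add_zero] at h2; exact ⟨a, le_refl _, by omega, by omega⟩
  | succ k ih =>
    intro a hstep h1 h2
    by_cases hc : f (a+1) ≤ v
    · obtain ⟨i, hi1, hi2, hi3⟩ := ih (a+1) (fun i u1 u2 => hstep i (by omega) (by omega))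
        hc (by have : a + 1 + k = a + (k+1) := by omega
               rw [this]; exact h2)
      exact ⟨i, by omega, by omega, hi3⟩
    · have := hstep a (le_refl _) (by omega)
      exact ⟨a, le_refl _, by omega, by omega⟩

lemma ivt_down (f : ℕ → ℕ) (v : ℕ) :
    ∀ k a, (∀ i, a ≤ i → i < a + k → f i ≤ f (i+1) + 1) →
      v ≤ f a → f (a + k) ≤ v → ∃ i, a ≤ i ∧ i ≤ a + k ∧ f i = v := by
  intro k
  induction k with
  | zero => intro a _ h1 h2; rw [Nat.add_zero] at h2; exact ⟨a, le_refl _, by omega, by omega⟩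
  | succ k ih =>
    intro a hstep h1 h2
    by_cases hc : v ≤ f (a+1)
    · obtain ⟨i, hi1, hi2, hi3⟩ := ih (a+1) (fun i u1 u2 => hstep i (by omega) (by omega))
        hc (by have : a + 1 + k = a + (k+1) := by omega
               rw [this]; exact h2)
      exact ⟨i, by omega, by omega, hi3⟩
    · have := hstep a (le_refl _) (by omega)
      exact ⟨a, le_refl _, by omega, by omega⟩

lemma ivt_path {d : ℕ} (n : ℕ) (γ : ℕ → Fin d → ℤ)
    (hpath : ∀ i < n, normInf (γ (i+1) - γ i) = 1)
    (x : Fin d → ℤ) (v : ℕ) {a b : ℕ} (ha : a ≤ n) (hb : b ≤ n)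
    (h1 : normInf (γ a - x) ≤ v) (h2 : v ≤ normInf (γ b - x)) :
    ∃ i ≤ n, normInf (γ i - x) = v := by
  set f : ℕ → ℕ := fun i => normInf (γ i - x) with hf
  have hstep : ∀ i < n, f (i+1) ≤ f i + 1 ∧ f i ≤ f (i+1) + 1 := by
    intro i hi
    constructor
    · have := normInf_tri (γ (i+1)) (γ i) x
      rw [hpath i hi] at this
      simpa [hf] using this.trans (by omega)
    · have := normInf_tri (γ i) (γ (i+1)) x
      rw [normInf_sub_comm (γ i) (γ (i+1)), hpath i hi] at this
      simpa [hf] using this.trans (by omega)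
  rcases le_or_gt a b with hab | hab
  · obtain ⟨i, hi1, hi2, hi3⟩ := ivt_up f v (b - a) a
      (fun i u1 u2 => (hstep i (by omega)).1) h1
      (by have : a + (b - a) = b := by omega
          rw [this]; exact h2)
    exact ⟨i, by omega, hi3⟩
  · obtain ⟨i, hi1, hi2, hi3⟩ := ivt_down f v (a - b) b
      (fun i u1 u2 => (hstep i (by omega)).2) h2
      (by have : b + (a - b) = a := by omega
          rw [this]; exact h1)
    exact ⟨i, by omega, hi3⟩

lemma rounding {d : ℕ} (hd : 1 ≤ d) (y : Fin d → ℤ) (l c : ℕ) (hl : 1 ≤ l) (hc : 1 ≤ c)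
    (hy : normInf y = c * l) :
    ∃ x : Fin d → ℤ, (∀ i, ((l : ℕ) : ℤ) ∣ x i) ∧
      normInf (y - x) ≤ l - 1 ∧ normInf x = c * l := by
  refine ⟨fun i => (l : ℤ) * (y i / (l : ℤ)), fun i => ⟨_, rfl⟩, ?_, ?_⟩
  case _ =>
    apply normInf_le
    intro i
    have hmod : y i - (l : ℤ) * (y i / (l : ℤ)) = y i % (l : ℤ) := by
      rw [Int.emod_def]
    have h0 : (0 : ℤ) ≤ y i % (l : ℤ) := Int.emod_nonneg _ (Int.natCast_ne_zero.mpr (by omega))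
    have h1 : y i % (l : ℤ) < (l : ℤ) := Int.emod_lt_of_pos _ (by exact_mod_cast hl)
    simp only [Pi.sub_apply, hmod]
    omega
  case _ =>
    set x : Fin d → ℤ := fun i => (l : ℤ) * (y i / (l : ℤ)) with hx
    have hnear : normInf (y - x) ≤ l - 1 := by
      apply normInf_le
      intro i
      have hmod : y i - (l : ℤ) * (y i / (l : ℤ)) = y i % (l : ℤ) := by
        rw [Int.emod_def]
      have h0 : (0 : ℤ) ≤ y i % (l : ℤ) := Int.emod_nonneg _ (Int.natCast_ne_zero.mpr (by omega))
      have h1 : y i % (l : ℤ) < (l : ℤ) := Int.emod_lt_of_pos _ (by exact_mod_cast hl)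
      simp only [Pi.sub_apply, hx, hmod]
      omega
    have hub : normInf x ≤ (l - 1) + c * l := by
      have := normInf_tri' x y
      rw [normInf_sub_comm x y] at this
      omega
    have hlb : c * l ≤ (l - 1) + normInf x := by
      have := normInf_tri' y x
      omega
    obtain ⟨i, hi⟩ := exists_normInf_eq hd x
    have hdvd : l ∣ (x i).natAbs := by
      have h' : ((l : ℕ) : ℤ) ∣ x i := ⟨_, rfl⟩
      simpa using Int.natAbs_dvd_natAbs.mpr h'
    obtain ⟨q, hq⟩ := hdvd
    rw [hi, hq] at hub hlb ⊢
    have e1 : (q + 1) * l = l * q + l := by ring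
    have e2 : (c + 1) * l = c * l + l := by ring
    have e3 : q * l = l * q := by ring
    have h1 : c * l < (q + 1) * l := by omega
    have h2 : q * l < (c + 1) * l := by omega
    have hq1 : c < q + 1 := Nat.lt_of_mul_lt_mul_right h1
    have hq2 : q < c + 1 := Nat.lt_of_mul_lt_mul_right h2
    have : q = c := by omega
    rw [this]; ring

/-- Glue two embeddings of height-`N` trees below a root at `0`, with subtree roots
`x1` (for `false`) and `x2` (for `true`). -/
def glueEmb {d : ℕ} (x1 x2 : Fin d → ℤ) (T1 T2 : List Bool → (Fin d → ℤ)) :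
    List Bool → (Fin d → ℤ)
  | [] => 0
  | (false :: m) => x1 + T1 m
  | (true :: m) => x2 + T2 m

theorem crossing_main (d L : ℕ) (hd : 1 ≤ d) (hL : 1 ≤ L) :
    ∀ (N n : ℕ) (γ : ℕ → (Fin d → ℤ)),
      (∀ i < n, normInf (γ (i + 1) - γ i) = 1) →
      (∃ i ≤ n, normInf (γ i) = 6 ^ N * L - 1) →
      (∃ i ≤ n, normInf (γ i) = 2 * (6 ^ N * L)) →
      ∃ T : List Bool → (Fin d → ℤ), IsProperEmbedding d L N T ∧
        ∀ m : List Bool, m.length = N →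
          (∃ i ≤ n, normInf (γ i - T m) = L - 1) ∧
          (∃ i ≤ n, normInf (γ i - T m) = 2 * L) := by
  intro N
  induction N with
  | zero =>
    intro n γ hpath hin hout
    refine ⟨fun _ => 0, ⟨rfl, fun m _ i => dvd_zero _, fun m hm => absurd hm (by omega)⟩, ?_⟩
    intro m _
    constructor
    · obtain ⟨i, hi, h⟩ := hin
      exact ⟨i, hi, by simpa using h⟩
    · obtain ⟨i, hi, h⟩ := hout
      exact ⟨i, hi, by simpa using h⟩
  | succ N ih =>
    intro n γ hpath hin hout
    set l : ℕ := 6 ^ N * L with hldef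
    have hl : 1 ≤ l := Nat.one_le_iff_ne_zero.mpr (by positivity)
    have h6 : 6 ^ (N + 1) * L = 6 * l := by rw [pow_succ]; ring
    obtain ⟨ia, hia, hna⟩ := hin
    obtain ⟨ib, hib, hnb⟩ := hout
    rw [h6] at hna hnb
    -- a point of the path at norm exactly 6*l
    obtain ⟨j1, hj1, hnj1⟩ := ivt_path n γ hpath 0 (6 * l) hia hib
      (by simpa [hna] using Nat.le_of_lt_succ (by omega)) (by simp [hnb]; omega)
    -- round it to x1
    obtain ⟨x1, hx1dvd, hx1near, hx1norm⟩ := rounding hd (γ j1) l 6 hl (by omega)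
      (by simpa using hnj1)
    -- the path is far from x1 at time ib
    have hfar1 : 6 * l ≤ normInf (γ ib - x1) := by
      have := normInf_tri' (γ ib) x1
      rw [hnb, hx1norm] at this
      omega
    have hcross1a : ∃ i ≤ n, normInf (γ i - x1) = l - 1 :=
      ivt_path n γ hpath x1 (l - 1) hj1 hib hx1near (by omega)
    have hcross1b : ∃ i ≤ n, normInf (γ i - x1) = 2 * l :=
      ivt_path n γ hpath x1 (2 * l) hj1 hib (by omega) (by omega)
    -- round γ ib to x2
    obtain ⟨x2, hx2dvd, hx2near, hx2norm⟩ := rounding hd (γ ib) l 12 hl (by omega)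
      (by rw [hnb]; ring)
    have hfar2 : 2 * l ≤ normInf (γ ia - x2) := by
      have := normInf_tri' x2 (γ ia)
      rw [hx2norm, normInf_sub_comm x2 (γ ia), hna] at this
      omega
    have hcross2a : ∃ i ≤ n, normInf (γ i - x2) = l - 1 :=
      ivt_path n γ hpath x2 (l - 1) hib hia hx2near (by omega)
    have hcross2b : ∃ i ≤ n, normInf (γ i - x2) = 2 * l :=
      ivt_path n γ hpath x2 (2 * l) hib hia (by omega) hfar2
    -- apply the induction hypothesis to the two translated paths
    have hpath1 : ∀ i < n, normInf ((fun i => γ i - x1) (i + 1) - (fun i => γ i - x1) i) = 1 := by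
      intro i hi
      simpa [sub_sub_sub_cancel_right] using hpath i hi
    have hpath2 : ∀ i < n, normInf ((fun i => γ i - x2) (i + 1) - (fun i => γ i - x2) i) = 1 := by
      intro i hi
      simpa [sub_sub_sub_cancel_right] using hpath i hi
    obtain ⟨T1, hT1, hleaf1⟩ := ih n (fun i => γ i - x1) hpath1 hcross1a hcross1b
    obtain ⟨T2, hT2, hleaf2⟩ := ih n (fun i => γ i - x2) hpath2 hcross2a hcross2b
    obtain ⟨hT1root, hT1dvd, hT1child⟩ := hT1
    obtain ⟨hT2root, hT2dvd, hT2child⟩ := hT2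
    refine ⟨glueEmb x1 x2 T1 T2, ⟨rfl, ?_, ?_⟩, ?_⟩
    · -- divisibility
      intro m hm i
      match m with
      | [] => simp [glueEmb]
      | (b :: m') =>
        have hm' : m'.length ≤ N := by simpa using Nat.le_of_succ_le_succ (by simpa using hm)
        have hsub : N + 1 - (b :: m').length = N - m'.length := by
          simp [List.length_cons]
        rw [hsub]
        have hdl : ((6 ^ (N - m'.length) * L : ℕ) : ℤ) ∣ ((l : ℕ) : ℤ) := by
          exact_mod_cast Nat.mul_dvd_mul_right
            (pow_dvd_pow 6 (Nat.sub_le N m'.length)) L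
        match b with
        | false =>
          show ((6 ^ (N - m'.length) * L : ℕ) : ℤ) ∣ (x1 + T1 m') i
          simp only [Pi.add_apply]
          exact dvd_add (hdl.trans (hx1dvd i)) (hT1dvd m' hm' i)
        | true =>
          show ((6 ^ (N - m'.length) * L : ℕ) : ℤ) ∣ (x2 + T2 m') i
          simp only [Pi.add_apply]
          exact dvd_add (hdl.trans (hx2dvd i)) (hT2dvd m' hm' i)
    · -- children distances
      intro m hm
      match m with
      | [] =>
        constructor
        · show normInf (glueEmb x1 x2 T1 T2 [false] - glueEmb x1 x2 T1 T2 []) = _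
          simp only [glueEmb, hT1root, add_zero, sub_zero, List.length_nil, Nat.sub_zero]
          rw [hx1norm, h6]
        · show normInf (glueEmb x1 x2 T1 T2 [true] - glueEmb x1 x2 T1 T2 []) = _
          simp only [glueEmb, hT2root, add_zero, sub_zero, List.length_nil, Nat.sub_zero]
          rw [hx2norm, h6]; ring
      | (b :: m') =>
        have hm' : m'.length < N := by simpa using Nat.lt_of_succ_lt_succ (by simpa using hm)
        have hsub : N + 1 - (b :: m').length = N - m'.length := by
          simp [List.length_cons]
        rw [hsub]
        match b with
        | false =>
          have h1 : (false :: m') ++ [false] = false :: (m' ++ [false]) := rfl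
          have h2 : (false :: m') ++ [true] = false :: (m' ++ [true]) := rfl
          rw [h1, h2]
          show normInf ((x1 + T1 (m' ++ [false])) - (x1 + T1 m')) = _ ∧
               normInf ((x1 + T1 (m' ++ [true])) - (x1 + T1 m')) = _
          rw [add_sub_add_left_eq_sub, add_sub_add_left_eq_sub]
          exact hT1child m' hm'
        | true =>
          have h1 : (true :: m') ++ [false] = true :: (m' ++ [false]) := rfl
          have h2 : (true :: m') ++ [true] = true :: (m' ++ [true]) := rfl
          rw [h1, h2]
          show normInf ((x2 + T2 (m' ++ [false])) - (x2 + T2 m')) = _ ∧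
               normInf ((x2 + T2 (m' ++ [true])) - (x2 + T2 m')) = _
          rw [add_sub_add_left_eq_sub, add_sub_add_left_eq_sub]
          exact hT2child m' hm'
    · -- leaves
      intro m hm
      match m with
      | [] => simp at hm
      | (b :: m') =>
        have hm' : m'.length = N := by simpa using hm
        match b with
        | false =>
          have key := hleaf1 m' hm'
          constructor
          · obtain ⟨i, hi, h⟩ := key.1
            refine ⟨i, hi, ?_⟩
            show normInf (γ i - (x1 + T1 m')) = L - 1
            rw [sub_add_eq_sub_sub]
            exact h
          · obtain ⟨i, hi, h⟩ := key.2
            refine ⟨i, hi, ?_⟩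
            show normInf (γ i - (x1 + T1 m')) = 2 * L
            rw [sub_add_eq_sub_sub]
            exact h
        | true =>
          have key := hleaf2 m' hm'
          constructor
          · obtain ⟨i, hi, h⟩ := key.1
            refine ⟨i, hi, ?_⟩
            show normInf (γ i - (x2 + T2 m')) = L - 1
            rw [sub_add_eq_sub_sub]
            exact h
          · obtain ⟨i, hi, h⟩ := key.2
            refine ⟨i, hi, ?_⟩
            show normInf (γ i - (x2 + T2 m')) = 2 * L
            rw [sub_add_eq_sub_sub]
            exact h

theorem proper_embedding_of_crossing (d L N : ℕ) (hd : 1 ≤ d) (hL : 1 ≤ L)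
    (n : ℕ) (γ : ℕ → (Fin d → ℤ))
    (hpath : ∀ i < n, normInf (γ (i + 1) - γ i) = 1)
    (hin : ∃ i ≤ n, normInf (γ i) = 6 ^ N * L - 1)
    (hout : ∃ i ≤ n, normInf (γ i) = 2 * (6 ^ N * L)) :
    ∃ T : List Bool → (Fin d → ℤ), IsProperEmbedding d L N T ∧
      ∀ m : List Bool, m.length = N →
        (∃ i ≤ n, normInf (γ i - T m) = L - 1) ∧
        (∃ i ≤ n, normInf (γ i - T m) = 2 * L) :=
  crossing_main d L hd hL N n γ hpath hin hout
end

section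
/- Let d ≥ 3. There exists a constant C'' > 0, depending only on d and L, such that for every N ≥ 0, every proper embedding 𝒯 ∈ Λ_N, and every u ∈ A = ∪_{m ∈ T_(N)} B(𝒯(m), 2L), one has Σ_{v ∈ A, v ≠ u} |u − v|^{2−d} ≤ C''. -/
/-- The `ℓ∞`-ball `B(x, r)` in `ℤ^d`. -/
def box {d : ℕ} (x : Fin d → ℤ) (r : ℕ) : Set (Fin d → ℤ) := {y | normInf (y - x) ≤ r}

/-- The union `A = ∪_{m ∈ T_(N)} B(𝒯(m), 2L)` over the leaves of `T_N`. -/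
def leafBoxes (d L N : ℕ) (T : List Bool → (Fin d → ℤ)) : Set (Fin d → ℤ) :=
  ⋃ m ∈ {m : List Bool | m.length = N}, box (T m) (2 * L)

lemma normInf_eq_norm {d : ℕ} (x : Fin d → ℤ) : (normInf x : ℝ) = ‖x‖ := by
  rw [Pi.norm_def, normInf, ← NNReal.coe_natCast, Nat.cast_finsetSup]
  simp only [NNReal.natCast_natAbs]

lemma mem_box_iff_norm_le {d : ℕ} {x y : Fin d → ℤ} {r : ℕ} : y ∈ box x r ↔ ‖y - x‖ ≤ r := by
  rw [← normInf_eq_norm, Nat.cast_le]; rfl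

lemma one_le_norm_of_ne_zero {d : ℕ} {x : Fin d → ℤ} (hx : x ≠ 0) : 1 ≤ ‖x‖ := by
  obtain ⟨i, hi⟩ := Function.ne_iff.1 hx
  calc (1 : ℝ) ≤ |(x i : ℝ)| := by exact_mod_cast Int.one_le_abs hi
    _ = ‖x i‖ := (Int.norm_eq_abs _).symm
    _ ≤ ‖x‖ := norm_le_pi_norm x i

noncomputable def boxFinset {d : ℕ} (x : Fin d → ℤ) (r : ℕ) : Finset (Fin d → ℤ) :=
  Finset.Icc (x - fun _ => (r : ℤ)) (x + fun _ => (r : ℤ))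

lemma mem_boxFinset {d : ℕ} {x y : Fin d → ℤ} {r : ℕ} : y ∈ boxFinset x r ↔ y ∈ box x r := by
  simp only [boxFinset, box, normInf, Finset.mem_Icc, Pi.le_def,
    Finset.sup_le_iff, Finset.mem_univ, true_imp_iff, ← forall_and, Pi.sub_apply, Pi.add_apply]
  exact forall_congr' fun i => by omega

lemma card_boxFinset {d : ℕ} (x : Fin d → ℤ) (r : ℕ) :
    (boxFinset x r).card = (2 * r + 1) ^ d := by
  simp only [boxFinset, Pi.card_Icc, Int.card_Icc, Pi.sub_apply, Pi.add_apply]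
  rw [Finset.prod_congr rfl fun i _ => show (x i + r + 1 - (x i - r)).toNat = 2 * r + 1 by omega]
  simp

lemma zpow_two_sub_le_inv {d : ℕ} (hd : 3 ≤ d) {a ρ : ℝ} (ha : 1 ≤ a) (hρ : 0 < ρ) (h : ρ ≤ a) :
    a ^ ((2 : ℤ) - d) ≤ ρ⁻¹ :=
  calc a ^ ((2 : ℤ) - d) ≤ a ^ (-1 : ℤ) := zpow_le_zpow_right₀ ha (by omega)
    _ = a⁻¹ := zpow_neg_one a
    _ ≤ ρ⁻¹ := inv_anti₀ hρ h

lemma sum_erase_boxFinset_le {d : ℕ} (hd : 3 ≤ d) (x u : Fin d → ℤ) (r : ℕ) {ρ : ℝ} (hρ : 0 < ρ)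
    (h : ∀ v ∈ boxFinset x r, v ≠ u → ρ ≤ ‖u - v‖) :
    ∑ v ∈ (boxFinset x r).erase u, ‖u - v‖ ^ ((2 : ℤ) - d) ≤ (2 * r + 1) ^ d * ρ⁻¹ := by
  have hterm : ∀ v ∈ (boxFinset x r).erase u, ‖u - v‖ ^ ((2 : ℤ) - d) ≤ ρ⁻¹ := by
    intro v hv
    obtain ⟨hvu, hv⟩ := Finset.mem_erase.1 hv
    exact zpow_two_sub_le_inv hd (one_le_norm_of_ne_zero (sub_ne_zero.2 hvu.symm)) hρ (h v hv hvu)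
  calc ∑ v ∈ (boxFinset x r).erase u, ‖u - v‖ ^ ((2 : ℤ) - d)
      ≤ ((boxFinset x r).erase u).card * ρ⁻¹ := by
        simpa using Finset.sum_le_card_nsmul _ _ _ hterm
    _ ≤ (boxFinset x r).card * ρ⁻¹ := by gcongr; exact Finset.erase_subset u _
    _ = (2 * r + 1) ^ d * ρ⁻¹ := by rw [card_boxFinset]; push_cast; ring

lemma sum_biUnion_le_sum_sum {ι α M : Type*} [DecidableEq α] [AddCommMonoid M] [PartialOrder M]
    [IsOrderedAddMonoid M] (s : Finset ι) (t : ι → Finset α) {f : α → M} (hf : ∀ x, 0 ≤ f x) :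
    ∑ x ∈ s.biUnion t, f x ≤ ∑ i ∈ s, ∑ x ∈ t i, f x := by
  have : s.biUnion t = (s.sigma t).image Sigma.snd := by ext; simp
  rw [this]
  exact (Finset.sum_image_le_of_nonneg fun x _ => hf x).trans_eq (Finset.sum_sigma _ _ _)

/-- Condition (iii) of a proper embedding; unlike (i) and (ii) it passes to the subtrees
`t ↦ T (b :: t)`. -/
def HasTreeSteps (d L N : ℕ) (T : List Bool → (Fin d → ℤ)) : Prop :=
  ∀ m : List Bool, m.length < N →
    normInf (T (m ++ [false]) - T m) = 6 ^ (N - m.length) * L ∧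
    normInf (T (m ++ [true]) - T m) = 2 * (6 ^ (N - m.length) * L)

namespace HasTreeSteps

variable {d L N : ℕ} {T : List Bool → (Fin d → ℤ)}

lemma subtree (h : HasTreeSteps d L (N + 1) T) (b : Bool) :
    HasTreeSteps d L N fun t => T (b :: t) := by
  intro m hm
  simpa using h (b :: m) (by simpa using hm)

lemma norm_child_sub_root (h : HasTreeSteps d L (N + 1) T) :
    ‖T [false] - T []‖ = 6 ^ (N + 1) * L ∧ ‖T [true] - T []‖ = 2 * (6 ^ (N + 1) * L) := by
  obtain ⟨hf, ht⟩ := h [] (Nat.succ_pos N)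
  rw [← normInf_eq_norm, ← normInf_eq_norm]
  exact ⟨by exact_mod_cast hf, by exact_mod_cast ht⟩

lemma norm_sub_root_le (h : HasTreeSteps d L N T) {t : List Bool} (ht : t.length ≤ N) :
    5 * ‖T t - T []‖ ≤ 12 * (6 ^ N * L) := by
  induction t generalizing N T with
  | nil => simp
  | cons b t ih =>
    obtain ⟨N, rfl⟩ : ∃ N', N = N' + 1 := ⟨N - 1, by simp at ht; omega⟩
    have hsub := ih (h.subtree b) (by simpa using ht)
    have hchild : ‖T [b] - T []‖ ≤ 2 * (6 ^ (N + 1) * L) := by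
      obtain ⟨hfalse, htrue⟩ := h.norm_child_sub_root
      cases b
      · rw [hfalse]; linarith [show (0 : ℝ) ≤ 6 ^ (N + 1) * L by positivity]
      · exact htrue.le
    have := norm_sub_le_norm_sub_add_norm_sub (T (b :: t)) (T [b]) (T [])
    rw [pow_succ] at hchild ⊢
    linarith

lemma le_norm_sub_of_head_ne (h : HasTreeSteps d L (N + 1) T) (b : Bool) {t₁ t₂ : List Bool}
    (h₁ : t₁.length ≤ N) (h₂ : t₂.length ≤ N) :
    6 ^ (N + 1) * L ≤ 5 * ‖T (b :: t₁) - T ((!b) :: t₂)‖ := by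
  have hd₁ := (h.subtree b).norm_sub_root_le h₁
  have hd₂ := (h.subtree !b).norm_sub_root_le h₂
  have hchildren : 6 ^ (N + 1) * L ≤ ‖T [b] - T [!b]‖ := by
    obtain ⟨hfalse, htrue⟩ := h.norm_child_sub_root
    have := norm_sub_norm_le (T [true] - T []) (T [false] - T [])
    rw [sub_sub_sub_cancel_right] at this
    cases b
    · rw [Bool.not_false, norm_sub_rev]; linarith
    · rw [Bool.not_true]; linarith
  have := norm_sub_le_norm_sub_add_norm_sub (T [b]) (T (b :: t₁)) (T [!b])
  have := norm_sub_le_norm_sub_add_norm_sub (T (b :: t₁)) (T ((!b) :: t₂)) (T [!b])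
  rw [norm_sub_rev] at hd₁
  rw [pow_succ] at hchildren ⊢
  linarith

lemma le_norm_sub_of_mem_box (h : HasTreeSteps d L (N + 1) T) (hL : 1 ≤ L) (b : Bool)
    {t₁ t₂ : List Bool} (h₁ : t₁.length ≤ N) (h₂ : t₂.length ≤ N) {u v : Fin d → ℤ}
    (hu : u ∈ box (T (b :: t₁)) (2 * L)) (hv : v ∈ box (T ((!b) :: t₂)) (2 * L)) (huv : u ≠ v) :
    6 ^ (N + 1) ≤ 25 * ‖u - v‖ := by
  have hsep := h.le_norm_sub_of_head_ne b h₁ h₂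
  rw [mem_box_iff_norm_le] at hu hv
  have hx : 1 ≤ ‖u - v‖ := one_le_norm_of_ne_zero (sub_ne_zero.2 huv)
  have := norm_sub_le_norm_sub_add_norm_sub (T (b :: t₁)) u (T ((!b) :: t₂))
  have := norm_sub_le_norm_sub_add_norm_sub u v (T ((!b) :: t₂))
  rw [norm_sub_rev] at hu
  -- `6^(N+1) L ≤ 5 (‖u - v‖ + 4L) ≤ 25 ‖u - v‖ L`, as `‖u - v‖ ≥ 1`
  have hL' : (1 : ℝ) ≤ L := by exact_mod_cast hL
  have hfar : 6 ^ (N + 1) * (L : ℝ) ≤ 25 * ‖u - v‖ * L := by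
    push_cast at hu hv
    nlinarith
  exact le_of_mul_le_mul_right hfar (by linarith)

end HasTreeSteps

lemma sum_boolTuple_succ {M : Type*} [AddCommMonoid M] {N : ℕ} (F : (Fin (N + 1) → Bool) → M)
    (b : Bool) :
    ∑ f, F f = ∑ f : Fin N → Bool, F (Fin.cons b f) + ∑ f : Fin N → Bool, F (Fin.cons (!b) f) := by
  rw [← (Fin.consEquiv fun _ => Bool).sum_comp, Fintype.sum_prod_type, Fintype.sum_bool]
  cases b
  · exact add_comm _ _
  · rfl

lemma two_pow_mul_div_six_pow_le (N : ℕ) :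
    (2 : ℝ) ^ N * (25 / 6 ^ (N + 1)) ≤ 8 / 3 ^ N - 8 / 3 ^ (N + 1) := by
  rw [show (6 : ℝ) ^ (N + 1) = 2 ^ N * 3 ^ N * 6 by rw [pow_succ, ← mul_pow]; norm_num, pow_succ]
  field_simp
  norm_num

lemma sum_leafBoxes_le {d L : ℕ} (hd : 3 ≤ d) (hL : 1 ≤ L) {N : ℕ} {T : List Bool → (Fin d → ℤ)}
    (h : HasTreeSteps d L N T) (f₀ : Fin N → Bool) {u : Fin d → ℤ}
    (hu : u ∈ box (T (List.ofFn f₀)) (2 * L)) :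
    ∑ f : Fin N → Bool, ∑ v ∈ (boxFinset (T (List.ofFn f)) (2 * L)).erase u,
      ‖u - v‖ ^ ((2 : ℤ) - d) ≤ (4 * L + 1) ^ d * (9 - 8 / 3 ^ N) := by
  induction N generalizing T with
  | zero =>
    rw [Fintype.sum_unique]
    calc _ ≤ (2 * (2 * L : ℕ) + 1 : ℝ) ^ d * 1⁻¹ :=
          sum_erase_boxFinset_le hd _ u _ one_pos
            fun v _ hvu => one_le_norm_of_ne_zero (sub_ne_zero.2 hvu.symm)
      _ = _ := by push_cast; ring
  | succ N ih =>
    set b := f₀ 0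
    rw [sum_boolTuple_succ _ b]
    simp only [List.ofFn_cons]
    rw [List.ofFn_succ] at hu
    have hnear := ih (h.subtree b) (Fin.tail f₀) hu
    have hfar : ∀ f : Fin N → Bool, ∑ v ∈ (boxFinset (T ((!b) :: List.ofFn f)) (2 * L)).erase u,
        ‖u - v‖ ^ ((2 : ℤ) - d) ≤ (4 * L + 1) ^ d * (25 / 6 ^ (N + 1)) := by
      intro f
      calc _ ≤ (2 * (2 * L : ℕ) + 1 : ℝ) ^ d * (6 ^ (N + 1) / 25)⁻¹ := by
            refine sum_erase_boxFinset_le hd _ u _ (by positivity) fun v hv hvu => ?_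
            rw [div_le_iff₀' (by norm_num)]
            exact h.le_norm_sub_of_mem_box hL b (by simp) (by simp) hu
              (mem_boxFinset.1 hv) hvu.symm
        _ = _ := by push_cast; ring
    calc _ ≤ (4 * L + 1 : ℝ) ^ d * (9 - 8 / 3 ^ N)
          + ∑ f : Fin N → Bool, (4 * L + 1 : ℝ) ^ d * (25 / 6 ^ (N + 1)) :=
          add_le_add hnear (Finset.sum_le_sum fun f _ => hfar f)
      _ ≤ (4 * L + 1 : ℝ) ^ d * (9 - 8 / 3 ^ (N + 1)) := by
          simp only [Finset.sum_const, Finset.card_univ, Fintype.card_fun, Fintype.card_bool,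
            Fintype.card_fin, nsmul_eq_mul]
          push_cast
          linarith [mul_le_mul_of_nonneg_left (two_pow_mul_div_six_pow_le N)
            (by positivity : (0 : ℝ) ≤ (4 * L + 1) ^ d)]

lemma leafBoxes_eq_biUnion (d L N : ℕ) (T : List Bool → (Fin d → ℤ)) :
    leafBoxes d L N T =
      ↑(Finset.univ.biUnion fun f : Fin N → Bool => boxFinset (T (List.ofFn f)) (2 * L)) := by
  ext v
  simp only [leafBoxes, Set.mem_iUnion, Set.mem_ofPred_eq, exists_prop, Finset.coe_biUnion,
    Finset.coe_univ, Set.mem_univ, true_and, Finset.mem_coe, mem_boxFinset]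
  constructor
  · rintro ⟨m, rfl, hv⟩
    exact ⟨fun i : Fin m.length => m[(i : ℕ)], by rwa [List.ofFn_getElem]⟩
  · rintro ⟨f, hv⟩
    exact ⟨_, List.length_ofFn, hv⟩

theorem sum_inv_dist_pow_le (d : ℕ) (hd : 3 ≤ d) (L : ℕ) (hL : 1 ≤ L) :
    ∃ C : ℝ, 0 < C ∧
      ∀ (N : ℕ) (T : List Bool → (Fin d → ℤ)), IsProperEmbedding d L N T →
        ∀ u ∈ leafBoxes d L N T,
          (∑ᶠ v ∈ {v : Fin d → ℤ | v ∈ leafBoxes d L N T ∧ v ≠ u},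
            (normInf (u - v) : ℝ) ^ ((2 : ℤ) - (d : ℤ))) ≤ C := by
  refine ⟨9 * (4 * L + 1) ^ d, by positivity, fun N T hT u hu => ?_⟩
  rw [leafBoxes_eq_biUnion] at hu ⊢
  set A := Finset.univ.biUnion fun f : Fin N → Bool => boxFinset (T (List.ofFn f)) (2 * L)
  obtain ⟨f₀, -, hu⟩ := Finset.mem_biUnion.1 hu
  have hA : {v | v ∈ (A : Set (Fin d → ℤ)) ∧ v ≠ u} = ↑(A.erase u) := by
    rw [Finset.coe_erase]; rfl
  rw [hA, finsum_mem_coe_finset, Finset.erase_biUnion]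
  calc _ ≤ ∑ f : Fin N → Bool, ∑ v ∈ (boxFinset (T (List.ofFn f)) (2 * L)).erase u,
          ‖u - v‖ ^ ((2 : ℤ) - d) := by
        simp only [normInf_eq_norm]
        exact sum_biUnion_le_sum_sum _ _ fun v => by positivity
    _ ≤ (4 * L + 1) ^ d * (9 - 8 / 3 ^ N) :=
        sum_leafBoxes_le hd hL hT.2.2 f₀ (mem_boxFinset.1 hu)
    _ ≤ 9 * (4 * L + 1) ^ d := by
        have : (0 : ℝ) ≤ (4 * L + 1) ^ d * (8 / 3 ^ N) := by positivity
        linarith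
end

section
/- Let d ≥ 1 and fix an integer L ≥ 1, setting L_N = 6^N·L. Let μ be any probability measure on {0,1}^{ℤ^d} (with the product σ-algebra). If for every N ∈ ℕ one has μ({ξ : B(L_N − 1) ↔ξ B(2L_N)^c}) < 2^{−2^N}, then μ(Perc) = 0. -/
open MeasureTheory

/-- The `ℓ¹` norm of a point of `ℤ^d`, as a natural number. -/
def norm1 {d : ℕ} (x : Fin d → ℤ) : ℕ := ∑ i, (x i).natAbs

/-- The event `A ↔ξ B`: there is a nearest-neighbor path `γ(0), …, γ(n)` (consecutive
points at `ℓ¹`-distance 1) of open sites (`ξ = true`), with `γ(0)` a nearest neighbor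
of a point of `A` and `γ(n)` a nearest neighbor of a point of `B`. -/
def connEvent (d : ℕ) (A B : Set (Fin d → ℤ)) : Set ((Fin d → ℤ) → Bool) :=
  {ξ | ∃ (n : ℕ) (γ : ℕ → (Fin d → ℤ)),
    (∀ i < n, norm1 (γ (i + 1) - γ i) = 1) ∧
    (∀ i ≤ n, ξ (γ i) = true) ∧
    (∃ a ∈ A, norm1 (γ 0 - a) = 1) ∧
    (∃ b ∈ B, norm1 (γ n - b) = 1)}

/-- `Perc`: the set of configurations containing an infinite nearest-neighbor path
(with pairwise distinct vertices) of open sites. -/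
def Perc (d : ℕ) : Set ((Fin d → ℤ) → Bool) :=
  {ξ | ∃ γ : ℕ → (Fin d → ℤ), Function.Injective γ ∧
    (∀ i, norm1 (γ (i + 1) - γ i) = 1) ∧ ∀ i, ξ (γ i) = true}

/-! An infinite self-avoiding open path leaves every box, so once `L_N` exceeds the
distance of its starting point from the origin, it realises the crossing event
`B(L_N - 1) ↔ B(2 L_N)ᶜ`. Hence `Perc` lies in the lim inf of the crossing events, whose
probabilities tend to zero. -/

open Filter Topology

section Lattice

variable {d : ℕ}

lemma natAbs_le_normInf (x : Fin d → ℤ) (i : Fin d) : (x i).natAbs ≤ normInf x :=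
  Finset.le_sup (f := fun i => (x i).natAbs) (Finset.mem_univ i)

lemma natAbs_le_norm1 (x : Fin d → ℤ) (i : Fin d) : (x i).natAbs ≤ norm1 x :=
  Finset.single_le_sum (f := fun i => (x i).natAbs) (fun _ _ => Nat.zero_le _)
    (Finset.mem_univ i)

lemma norm1_sub_comm (x y : Fin d → ℤ) : norm1 (x - y) = norm1 (y - x) :=
  Finset.sum_congr rfl fun i _ => by simp only [Pi.sub_apply]; omega

lemma normInf_le_add_norm1_sub (x y : Fin d → ℤ) : normInf x ≤ normInf y + norm1 (x - y) :=
  Finset.sup_le fun i _ => by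
    have hx : (x i).natAbs ≤ (y i).natAbs + (x i - y i).natAbs := by
      simpa using Int.natAbs_add_le (y i) (x i - y i)
    have hy := natAbs_le_normInf y i
    have hxy := natAbs_le_norm1 (x - y) i
    simp only [Pi.sub_apply] at hxy
    omega

lemma exists_norm1_sub_eq_one [NeZero d] (x : Fin d → ℤ) : ∃ y, norm1 (x - y) = 1 :=
  ⟨x - Pi.single 0 1, by simp [norm1, Pi.single_apply, apply_ite Int.natAbs]⟩

lemma finite_box (x : Fin d → ℤ) (r : ℕ) : (box x r).Finite := by
  refine (Set.Finite.pi fun i => Set.finite_Icc (x i - r) (x i + r)).subset fun y hy i _ => ?_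
  have := (natAbs_le_normInf (y - x) i).trans hy
  simp only [Pi.sub_apply] at this
  constructor <;> omega

lemma Function.Injective.exists_lt_normInf {ι : Type*} [Infinite ι] {γ : ι → Fin d → ℤ}
    (hγ : Function.Injective γ) (R : ℕ) : ∃ n, R < normInf (γ n) := by
  by_contra! hbounded
  refine Set.infinite_range_of_injective hγ ((finite_box 0 R).subset ?_)
  rintro _ ⟨n, rfl⟩
  simpa [box] using hbounded n

lemma eventually_mem_connEvent_of_mem_perc [NeZero d] {ξ : (Fin d → ℤ) → Bool}
    (hξ : ξ ∈ Perc d) {r : ℕ → ℕ} (hr : Tendsto r atTop atTop) (R : ℕ → ℕ) :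
    ∀ᶠ N in atTop, ξ ∈ connEvent d (box 0 (r N)) (box 0 (R N))ᶜ := by
  obtain ⟨γ, hinj, hstep, hopen⟩ := hξ
  filter_upwards [hr.eventually_ge_atTop (normInf (γ 0) + 1)] with N hN
  obtain ⟨n, hn⟩ := hinj.exists_lt_normInf (R N + 1)
  obtain ⟨a, ha⟩ := exists_norm1_sub_eq_one (γ 0)
  obtain ⟨b, hb⟩ := exists_norm1_sub_eq_one (γ n)
  refine ⟨n, γ, fun i _ => hstep i, fun i _ => hopen i, ⟨a, ?_, ha⟩, ⟨b, ?_, hb⟩⟩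
  · have := normInf_le_add_norm1_sub a (γ 0)
    rw [norm1_sub_comm, ha] at this
    simp only [box, sub_zero, Set.mem_ofPred]
    omega
  · have := normInf_le_add_norm1_sub (γ n) b
    rw [hb] at this
    simp only [box, sub_zero, Set.mem_compl_iff, Set.mem_ofPred, not_le]
    omega

end Lattice

lemma MeasureTheory.measure_liminf_atTop_eq_zero_of_tendsto {α : Type*} [MeasurableSpace α]
    {μ : Measure α} {s : ℕ → Set α} (hs : Tendsto (fun n => μ (s n)) atTop (𝓝 0)) :
    μ (liminf s atTop) = 0 := by
  rw [liminf_eq_iSup_iInf_of_nat]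
  refine measure_iUnion_null fun M => le_antisymm ?_ zero_le
  exact ge_of_tendsto hs <|
    eventually_atTop.2 ⟨M, fun N hN => measure_mono (Set.biInter_subset_of_mem hN)⟩

theorem no_percolation_of_crossing_decay_general (d L : ℕ) (hd : 1 ≤ d) (hL : 1 ≤ L)
    (μ : Measure ((Fin d → ℤ) → Bool))
    (h : ∀ N : ℕ,
      μ (connEvent d (box (0 : Fin d → ℤ) (6 ^ N * L - 1))
          (box (0 : Fin d → ℤ) (2 * (6 ^ N * L)))ᶜ) < (2 : ENNReal)⁻¹ ^ 2 ^ N) :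
    μ (Perc d) = 0 := by
  have : NeZero d := ⟨by omega⟩
  set E : ℕ → Set ((Fin d → ℤ) → Bool) := fun N =>
    connEvent d (box 0 (6 ^ N * L - 1)) (box 0 (2 * (6 ^ N * L)))ᶜ
  have hradius : Tendsto (fun N => 6 ^ N * L - 1) atTop atTop := by
    refine tendsto_atTop_mono (fun N => ?_) tendsto_id
    have := Nat.lt_pow_self (n := N) (by norm_num : 1 < 6)
    have := Nat.le_mul_of_pos_right (6 ^ N) hL
    show N ≤ 6 ^ N * L - 1
    omega
  have hperc : Perc d ⊆ liminf E atTop := fun ξ hξ =>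
    mem_liminf_iff_eventually_mem.2 (eventually_mem_connEvent_of_mem_perc hξ hradius _)
  have hbound : Tendsto (fun N : ℕ => (2 : ENNReal)⁻¹ ^ 2 ^ N) atTop (𝓝 0) :=
    (ENNReal.tendsto_pow_atTop_nhds_zero_of_lt_one (by norm_num)).comp
      (tendsto_pow_atTop_atTop_of_one_lt one_lt_two)
  have hE : Tendsto (fun N => μ (E N)) atTop (𝓝 0) :=
    tendsto_of_tendsto_of_tendsto_of_le_of_le tendsto_const_nhds hbound (fun _ => zero_le)
      fun N => (h N).le
  exact measure_mono_null hperc (measure_liminf_atTop_eq_zero_of_tendsto hE)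

theorem no_percolation_of_crossing_decay (d L : ℕ) (hd : 1 ≤ d) (hL : 1 ≤ L)
    (μ : Measure ((Fin d → ℤ) → Bool)) (hμ : IsProbabilityMeasure μ)
    (h : ∀ N : ℕ,
      μ (connEvent d (box (0 : Fin d → ℤ) (6 ^ N * L - 1))
          (box (0 : Fin d → ℤ) (2 * (6 ^ N * L)))ᶜ) < (2 : ENNReal)⁻¹ ^ 2 ^ N) :
    μ (Perc d) = 0 :=
  no_percolation_of_crossing_decay_general d L hd hL μ h
end

section
/- Let B ⊆ ℤ^d be a finite set with 0 ∈ B, let x_1, …, x_n ∈ ℤ^d be such that the translates x_i + B, 1 ≤ i ≤ n, are pairwise disjoint, and let A = ∪_{i=1}^n (x_i + B). On a probability space (Ω, P), let ζ = (ζ(x))_{x ∈ A} be i.i.d. Bernoulli(α) random variables (α ∈ (0,1)), let 𝓘 be a random subset of {1,…,n} independent of ζ, and let ξ = (ξ(x))_{x ∈ A} be {0,1}-valued random variables such that almost surely, for every i ∈ 𝓘 and every b ∈ B, ξ(x_i + b) = ζ(x_i + b). Then for every E ⊆ {0,1}^B with π_α(E) > 0, P(for every 1 ≤ i ≤ n,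 the configuration (ξ(x_i + b))_{b ∈ B} lies in E) ≤ π_α(E)^n · 𝔼[π_α(E)^{−(n − |𝓘|)}], where π_α(E) = Σ_{η ∈ E} α^{Σ_b η(b)} (1−α)^{|B| − Σ_b η(b)}. -/
open MeasureTheory

/-!
STATEMENT 13: Let `B ⊆ ℤ^d` be finite with `0 ∈ B`, let `x_1, …, x_n ∈ ℤ^d` be such
that the translates `x_i + B` are pairwise disjoint, and let `A = ∪_i (x_i + B)`. On a
probability space `(Ω, P)` let `ζ = (ζ(x))_{x ∈ A}` be i.i.d. Bernoulli(α) random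
variables (`α ∈ (0,1)`), let `𝓘` be a random subset of `{1,…,n}` independent of `ζ`,
and let `ξ = (ξ(x))_{x ∈ A}` be `{0,1}`-valued random variables such that a.s., for
every `i ∈ 𝓘` and every `b ∈ B`, `ξ(x_i + b) = ζ(x_i + b)`. Then for every
`E ⊆ {0,1}^B` with `π_α(E) > 0`,
`P(∀ i, (ξ(x_i + b))_{b ∈ B} ∈ E) ≤ π_α(E)^n · 𝔼[π_α(E)^{−(n−|𝓘|)}]`,
where `π_α(E) = Σ_{η ∈ E} α^{Σ_b η(b)} (1−α)^{|B| − Σ_b η(b)}`.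

Modelling: `B : Finset (Fin d → ℤ)`, `E : Finset ({b // b ∈ B} → Bool)` (`true` = `1`);
the random variables are total functions `ζ ξ : (Fin d → ℤ) → Ω → Bool` (only their
values on `A` matter) and `𝓘 : Ω → Finset (Fin n)`. The i.i.d. Bernoulli(α)
distribution of `ζ` on `A`, and the independence of `𝓘` from `ζ`, are expressed by the
exact (finite-dimensional) product formulas for atoms, which fully characterize them.
Since `|𝓘| ≤ n`, `π_α(E)^{−(n−|𝓘|)} = (π_α(E)⁻¹)^(n−|𝓘|)` with a natural exponent.
-/

variable {d : ℕ}

/-- `π_α(E) = Σ_{η ∈ E} α^(#{b : η(b)=1}) (1−α)^(#{b : η(b)=0})` for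
`E ⊆ {0,1}^B`. -/
noncomputable def cylWeight (α : ℝ) (B : Finset (Fin d → ℤ))
    (E : Finset ({b // b ∈ B} → Bool)) : ℝ :=
  ∑ η ∈ E,
    α ^ (Finset.univ.filter fun b : {b // b ∈ B} => η b = true).card *
    (1 - α) ^ (Finset.univ.filter fun b : {b // b ∈ B} => η b = false).card

/-!
Condition on `𝓘 = S`. By independence, `ζ` is still i.i.d. Bernoulli(α) on this event, and
there the event of the theorem forces the `ζ`-configuration of every block `i ∈ S` into `E`,
since `ξ` copies `ζ` on those blocks; disjointness of the blocks makes these block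
configurations independent, so the conditional probability is at most `π_α(E)^|S|`. Averaging
over `S` gives `𝔼[π_α(E)^|𝓘|] = π_α(E)^n 𝔼[π_α(E)^{-(n-|𝓘|)}]`.
-/

open Finset

noncomputable def bernoulliWeight {κ : Type*} [Fintype κ] (α : ℝ) (g : κ → Bool) : ℝ :=
  ∏ k, if g k then α else 1 - α

section Bernoulli

variable {κ : Type*} [Fintype κ]

lemma bernoulliWeight_nonneg {α : ℝ} (hα : α ∈ Set.Icc (0 : ℝ) 1) (g : κ → Bool) :
    0 ≤ bernoulliWeight α g :=
  prod_nonneg fun k _ => by split_ifs <;> linarith [hα.1, hα.2]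

lemma sum_bernoulliWeight_univ [DecidableEq κ] (α : ℝ) :
    ∑ g : κ → Bool, bernoulliWeight α g = 1 := by
  have h := Fintype.prod_sum fun (_ : κ) (b : Bool) => if b then α else 1 - α
  simp only [Fintype.sum_bool, Bool.false_eq_true, if_true, if_false, add_sub_cancel,
    prod_const_one] at h
  exact h.symm

lemma ofReal_bernoulliWeight {α : ℝ} (hα : α ∈ Set.Icc (0 : ℝ) 1) (g : κ → Bool) :
    ENNReal.ofReal (bernoulliWeight α g) =
      ∏ k, if g k then ENNReal.ofReal α else ENNReal.ofReal (1 - α) := by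
  rw [bernoulliWeight, ENNReal.ofReal_prod_of_nonneg fun k _ => by
    split_ifs <;> linarith [hα.1, hα.2]]
  exact prod_congr rfl fun k _ => apply_ite ENNReal.ofReal _ _ _

lemma cylWeight_eq_sum_bernoulliWeight {d : ℕ} (α : ℝ) (B : Finset (Fin d → ℤ))
    (E : Finset ({b // b ∈ B} → Bool)) :
    cylWeight α B E = ∑ η ∈ E, bernoulliWeight α η := by
  refine sum_congr rfl fun η _ => ?_
  rw [bernoulliWeight, prod_ite, prod_const, prod_const]
  simp

end Bernoulli

section Conditioning

variable {Ω ι κ σ : Type*} [MeasurableSpace Ω] {P : Measure Ω} [Fintype ι] [DecidableEq ι]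
  [Fintype κ] {α : ℝ} {Z : Ω → ι → κ → Bool}

lemma measure_forall_mem_inter_le {I : Ω → σ} (hα : α ∈ Set.Icc (0 : ℝ) 1)
    (hZ : ∀ f : ι → κ → Bool, P {ω | Z ω = f} =
      ∏ i, ∏ k, if f i k then ENNReal.ofReal α else ENNReal.ofReal (1 - α))
    (hind : ∀ (f : ι → κ → Bool) (s : σ),
      P ({ω | Z ω = f} ∩ {ω | I ω = s}) = P {ω | Z ω = f} * P {ω | I ω = s})
    (F : ι → Finset (κ → Bool)) (s : σ) :
    P ({ω | ∀ i, Z ω i ∈ F i} ∩ {ω | I ω = s}) ≤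
      ENNReal.ofReal (∏ i, ∑ g ∈ F i, bernoulliWeight α g) * P {ω | I ω = s} := by
  have hw (f : ι → κ → Bool) :
      P {ω | Z ω = f} = ENNReal.ofReal (∏ i, bernoulliWeight α (f i)) := by
    rw [hZ, ENNReal.ofReal_prod_of_nonneg fun i _ => bernoulliWeight_nonneg hα _]
    simp_rw [ofReal_bernoulliWeight hα]
  calc P ({ω | ∀ i, Z ω i ∈ F i} ∩ {ω | I ω = s})
      = P (⋃ f ∈ Fintype.piFinset F, {ω | Z ω = f} ∩ {ω | I ω = s}) := by
        congr 1; ext ω; simp [Fintype.mem_piFinset]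
    -- no measurability of `{Z = f}` is assumed, so only the union bound is available
    _ ≤ ∑ f ∈ Fintype.piFinset F, P ({ω | Z ω = f} ∩ {ω | I ω = s}) :=
        measure_biUnion_finset_le _ _
    _ = ∑ f ∈ Fintype.piFinset F,
          ENNReal.ofReal (∏ i, bernoulliWeight α (f i)) * P {ω | I ω = s} := by
        simp_rw [hind, hw]
    _ = _ := by
        rw [← sum_mul, ← ENNReal.ofReal_sum_of_nonneg fun f _ =>
          prod_nonneg fun i _ => bernoulliWeight_nonneg hα _, ← prod_univ_sum]

lemma measure_forall_mem_le_sum [DecidableEq κ] {I : Ω → Finset ι}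
    {X : Ω → ι → κ → Bool} (hα : α ∈ Set.Icc (0 : ℝ) 1)
    (hZ : ∀ f : ι → κ → Bool, P {ω | Z ω = f} =
      ∏ i, ∏ k, if f i k then ENNReal.ofReal α else ENNReal.ofReal (1 - α))
    (hind : ∀ (f : ι → κ → Bool) (S : Finset ι),
      P ({ω | Z ω = f} ∩ {ω | I ω = S}) = P {ω | Z ω = f} * P {ω | I ω = S})
    (hcopy : ∀ᵐ ω ∂P, ∀ i ∈ I ω, X ω i = Z ω i) (E : Finset (κ → Bool)) :
    P {ω | ∀ i, X ω i ∈ E} ≤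
      ∑ S : Finset ι,
        ENNReal.ofReal ((∑ g ∈ E, bernoulliWeight α g) ^ S.card) * P {ω | I ω = S} := by
  have hsplit : P {ω | ∀ i, X ω i ∈ E} ≤
      ∑ S : Finset ι, P ({ω | ∀ i, X ω i ∈ E} ∩ {ω | I ω = S}) :=
    (measure_mono (t := ⋃ S : Finset ι, {ω | ∀ i, X ω i ∈ E} ∩ {ω | I ω = S})
      fun ω hω => Set.mem_iUnion.2 ⟨I ω, hω, rfl⟩).trans (measure_iUnion_fintype_le P _)
  refine hsplit.trans (sum_le_sum fun S _ => ?_)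
  calc P ({ω | ∀ i, X ω i ∈ E} ∩ {ω | I ω = S})
      ≤ P ({ω | ∀ i, Z ω i ∈ if i ∈ S then E else univ} ∩ {ω | I ω = S}) := by
        refine measure_mono_ae ?_
        filter_upwards [hcopy] with ω hω ⟨hX, hIS⟩
        refine ⟨fun i => ?_, hIS⟩
        split_ifs with hi
        · rw [← hω i (hIS ▸ hi)]
          exact hX i
        · exact mem_univ _
    _ ≤ ENNReal.ofReal (∏ i, ∑ g ∈ if i ∈ S then E else univ, bernoulliWeight α g) *
          P {ω | I ω = S} := measure_forall_mem_inter_le hα hZ hind _ S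
    _ = _ := by
        simp_rw [apply_ite (fun F => ∑ g ∈ F, bernoulliWeight α g), sum_bernoulliWeight_univ,
          prod_ite_mem, univ_inter, prod_const]

lemma ofReal_integral_comp_eq_sum [IsFiniteMeasure P] [Fintype σ] {I : Ω → σ}
    (hI : ∀ s, MeasurableSet {ω | I ω = s}) {f : σ → ℝ} (hf : 0 ≤ f) :
    ENNReal.ofReal (∫ ω, f (I ω) ∂P) = ∑ s, ENNReal.ofReal (f s) * P {ω | I ω = s} := by
  have hsum :
      (fun ω => f (I ω)) = fun ω => ∑ s, {ω' | I ω' = s}.indicator (fun _ => f s) ω := by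
    classical
    funext ω
    simp [Set.indicator_apply]
  rw [hsum, integral_finsetSum _ fun s _ => (integrable_const _).indicator (hI s),
    ENNReal.ofReal_sum_of_nonneg fun s _ => integral_nonneg fun ω =>
      Set.indicator_nonneg (fun _ _ => hf s) ω]
  refine sum_congr rfl fun s _ => ?_
  rw [integral_indicator_const _ (hI s), smul_eq_mul, ENNReal.ofReal_mul measureReal_nonneg,
    ofReal_measureReal, mul_comm]

end Conditioning

section Blocks

variable {n : ℕ} {x : Fin n → Fin d → ℤ} {B : Finset (Fin d → ℤ)}

lemma exists_extension_of_disjoint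
    (hdisj : ∀ i j : Fin n, i ≠ j → ∀ b ∈ B, ∀ b' ∈ B, x i + b ≠ x j + b')
    (f : Fin n → {b // b ∈ B} → Bool) :
    ∃ e : (Fin d → ℤ) → Bool, ∀ i (b : {b // b ∈ B}), e (x i + b) = f i b := by
  have hinj : Function.Injective fun p : Fin n × {b // b ∈ B} => x p.1 + p.2 := by
    rintro ⟨i, b⟩ ⟨j, c⟩ h
    obtain rfl : i = j := by_contra fun hij => hdisj i j hij b b.2 c c.2 h
    obtain rfl : b = c := Subtype.ext (add_left_cancel h)
    rfl
  exact ⟨Function.extend _ (fun p : Fin n × {b // b ∈ B} => f p.1 p.2) fun _ => false,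
    fun i b => hinj.extend_apply _ _ (i, b)⟩

lemma setOf_blocks_eq {Ω : Type*} (ζ : (Fin d → ℤ) → Ω → Bool)
    {f : Fin n → {b // b ∈ B} → Bool} {e : (Fin d → ℤ) → Bool}
    (he : ∀ i (b : {b // b ∈ B}), e (x i + b) = f i b) :
    {ω | (fun i (b : {b // b ∈ B}) => ζ (x i + b) ω) = f} =
      {ω | ∀ i, ∀ b ∈ B, ζ (x i + b) ω = e (x i + b)} := by
  ext ω
  simp only [Set.mem_ofPred_eq, funext_iff, Subtype.forall]
  exact forall_congr' fun i => forall₂_congr fun b hb => by rw [he i ⟨b, hb⟩]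

end Blocks

theorem joint_occurrence_bound_general {Ω : Type*} [MeasurableSpace Ω]
    (P : Measure Ω) (hP : IsProbabilityMeasure P)
    (α : ℝ) (hα : α ∈ Set.Ioo (0 : ℝ) 1)
    (B : Finset (Fin d → ℤ))
    (n : ℕ) (x : Fin n → (Fin d → ℤ))
    (hdisj : ∀ i j : Fin n, i ≠ j → ∀ b ∈ B, ∀ b' ∈ B, x i + b ≠ x j + b')
    (ζ ξ : (Fin d → ℤ) → Ω → Bool) (I : Ω → Finset (Fin n))
    -- ζ restricted to A = ∪_i (x_i + B) is a family of i.i.d. Bernoulli(α) variables: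
    (hiid : ∀ e : (Fin d → ℤ) → Bool,
      P {ω | ∀ (i : Fin n), ∀ b ∈ B, ζ (x i + b) ω = e (x i + b)} =
        ∏ i : Fin n, ∏ b ∈ B,
          if e (x i + b) then ENNReal.ofReal α else ENNReal.ofReal (1 - α))
    -- 𝓘 is independent of (ζ(x))_{x ∈ A}:
    (hind : ∀ (S : Finset (Fin n)) (e : (Fin d → ℤ) → Bool),
      P ({ω | ∀ (i : Fin n), ∀ b ∈ B, ζ (x i + b) ω = e (x i + b)} ∩ {ω | I ω = S}) =
        P {ω | ∀ (i : Fin n), ∀ b ∈ B, ζ (x i + b) ω = e (x i + b)} *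
          P {ω | I ω = S})
    (hImeas : ∀ S : Finset (Fin n), MeasurableSet {ω | I ω = S})
    -- a.s., ξ agrees with ζ on the blocks x_i + B with i ∈ 𝓘:
    (hcopy : ∀ᵐ ω ∂P, ∀ i ∈ I ω, ∀ b ∈ B, ξ (x i + b) ω = ζ (x i + b) ω)
    (E : Finset ({b // b ∈ B} → Bool)) (hE : 0 < cylWeight α B E) :
    P {ω | ∀ i : Fin n, (fun b : {b // b ∈ B} => ξ (x i + b.1) ω) ∈ E} ≤
      ENNReal.ofReal (cylWeight α B E ^ n *
        ∫ ω, (cylWeight α B E)⁻¹ ^ (n - (I ω).card) ∂P) := by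
  classical
  have hα' : α ∈ Set.Icc (0 : ℝ) 1 := Set.Ioo_subset_Icc_self hα
  set π := cylWeight α B E
  have hpow (S : Finset (Fin n)) : π ^ n * π⁻¹ ^ (n - S.card) = π ^ S.card := by
    rw [inv_pow, ← pow_sub₀ π hE.ne' (Nat.sub_le _ _),
      Nat.sub_sub_self (card_le_univ S |>.trans_eq (Fintype.card_fin n))]
  refine (measure_forall_mem_le_sum (Z := fun ω i (b : {b // b ∈ B}) => ζ (x i + b) ω)
    (I := I) hα' (fun f => ?_) (fun f S => ?_) ?_ E).trans_eq ?_
  · obtain ⟨e, he⟩ := exists_extension_of_disjoint hdisj f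
    rw [setOf_blocks_eq ζ he, hiid]
    simp_rw [← prod_coe_sort B, he]
  · obtain ⟨e, he⟩ := exists_extension_of_disjoint hdisj f
    rw [setOf_blocks_eq ζ he, hind]
  · filter_upwards [hcopy] with ω hω i hi
    funext b
    exact hω i hi b b.2
  · rw [← integral_const_mul,
      ofReal_integral_comp_eq_sum (f := fun S => π ^ n * π⁻¹ ^ (n - S.card)) hImeas
        fun S => by positivity, ← cylWeight_eq_sum_bernoulliWeight]
    simp_rw [hpow]
    rfl

theorem joint_occurrence_bound {Ω : Type*} [MeasurableSpace Ω]
    (P : Measure Ω) (hP : IsProbabilityMeasure P)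
    (α : ℝ) (hα : α ∈ Set.Ioo (0 : ℝ) 1)
    (B : Finset (Fin d → ℤ)) (hB : (0 : Fin d → ℤ) ∈ B)
    (n : ℕ) (x : Fin n → (Fin d → ℤ))
    (hdisj : ∀ i j : Fin n, i ≠ j → ∀ b ∈ B, ∀ b' ∈ B, x i + b ≠ x j + b')
    (ζ ξ : (Fin d → ℤ) → Ω → Bool) (I : Ω → Finset (Fin n))
    -- ζ restricted to A = ∪_i (x_i + B) is a family of i.i.d. Bernoulli(α) variables:
    (hiid : ∀ e : (Fin d → ℤ) → Bool,
      P {ω | ∀ (i : Fin n), ∀ b ∈ B, ζ (x i + b) ω = e (x i + b)} =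
        ∏ i : Fin n, ∏ b ∈ B,
          if e (x i + b) then ENNReal.ofReal α else ENNReal.ofReal (1 - α))
    -- 𝓘 is independent of (ζ(x))_{x ∈ A}:
    (hind : ∀ (S : Finset (Fin n)) (e : (Fin d → ℤ) → Bool),
      P ({ω | ∀ (i : Fin n), ∀ b ∈ B, ζ (x i + b) ω = e (x i + b)} ∩ {ω | I ω = S}) =
        P {ω | ∀ (i : Fin n), ∀ b ∈ B, ζ (x i + b) ω = e (x i + b)} *
          P {ω | I ω = S})
    (hImeas : ∀ S : Finset (Fin n), MeasurableSet {ω | I ω = S})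
    -- a.s., ξ agrees with ζ on the blocks x_i + B with i ∈ 𝓘:
    (hcopy : ∀ᵐ ω ∂P, ∀ i ∈ I ω, ∀ b ∈ B, ξ (x i + b) ω = ζ (x i + b) ω)
    (E : Finset ({b // b ∈ B} → Bool)) (hE : 0 < cylWeight α B E) :
    P {ω | ∀ i : Fin n, (fun b : {b // b ∈ B} => ξ (x i + b.1) ω) ∈ E} ≤
      ENNReal.ofReal (cylWeight α B E ^ n *
        ∫ ω, (cylWeight α B E)⁻¹ ^ (n - (I ω).card) ∂P) :=
  joint_occurrence_bound_general P hP α hα B n x hdisj ζ ξ I hiid hind hImeas hcopy E hE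
end
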